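/- Let {f_t : t ∈ T} ⊂ Γ₀(X) be a nonempty family, f := sup_{t∈T} f_t, x ∈ dom f, and ε > 0. Under the standard hypothesis (SH) one has N_{dom f}(x) = [ co‾( (⋃_{t∈T_ε(x)} ∂_ε f_t(x)) ∪ (⋃_{t∈T\T_ε(x)} ∂_ε f_t⁺(x)) ) ]_∞, where f_t⁺ := max{f_t, 0}. -/

import Mathlib

/-!
For `z ∈ dom f`, every element of the union is bounded above at `z - x` independently of `t`
(by `f z - f x + 2ε` or `max (f z) 0 + ε`), so a recession direction `p` of its closed convex
hull satisfies `⟨p, z - x⟩ ≤ 0`.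

Conversely, a weak*-closed convex set is the intersection of the half-spaces `{⟨·, y⟩ ≤ B}`
containing it, so it suffices to show that the union is unbounded at every `y` with
`⟨p, y⟩ > 0` when `p` is normal to `dom f`. Then `f = +∞` on the open ray `x + ℝ₊ y`;
upper semicontinuity in `t` makes the sets of indices with `f_t` large along the ray closed
and nested, so by compactness one `f_t` is `+∞` on the whole ray. Separating
`(x, f_t x - ε)` from the epigraph of `f_t` (or of `f_t⁺`) swept backwards along `(y, M)`
produces an `ε`-subgradient at `x` whose value at `y` exceeds `M`.
-/

open Set Pointwise Topology
open scoped Classical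

noncomputable section

variable {X : Type*} [AddCommGroup X] [Module ℝ X] [TopologicalSpace X]
  [IsTopologicalAddGroup X] [ContinuousSMul ℝ X] [LocallyConvexSpace ℝ X] [T2Space X]

/-- Convexity for extended-real-valued functions. -/
def EConvexOn' (f : X → EReal) : Prop :=
  ∀ x y : X, ∀ a b : ℝ, 0 ≤ a → 0 ≤ b → a + b = 1 →
    f (a • x + b • y) ≤ (a : EReal) * f x + (b : EReal) * f y

/-- `f ∈ Γ₀(X)`: proper, convex and lower semicontinuous. -/
def Gamma0 (f : X → EReal) : Prop :=
  (∀ x, f x ≠ ⊥) ∧ (∃ x, f x ≠ ⊤) ∧ EConvexOn' f ∧ LowerSemicontinuous f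

/-- Effective domain of `f`. -/
def edom (f : X → EReal) : Set X := {x | f x ≠ ⊤}

/-- The ε-subdifferential of `f` at `x` (a subset of the weak* dual);
it is empty when `ε < 0` or `f x ∉ ℝ`. -/
def esubdiff (f : X → EReal) (x : X) (ε : ℝ) : Set (WeakDual ℝ X) :=
  {p | 0 ≤ ε ∧ f x ≠ ⊤ ∧ f x ≠ ⊥ ∧
    ∀ y : X, f x + ((p y - p x - ε : ℝ) : EReal) ≤ f y}

/-- Normal cone to `A` at `x` (empty when `x ∉ A`). -/
def normalCone (A : Set X) (x : X) : Set (WeakDual ℝ X) :=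
  {p | x ∈ A ∧ ∀ y ∈ A, p y - p x ≤ 0}

/-- Recession cone of a set. -/
def recCone {V : Type*} [AddCommMonoid V] [Module ℝ V] (C : Set V) : Set V :=
  {y | ∃ c ∈ C, ∀ l : ℝ, 0 ≤ l → c + l • y ∈ C}

/-- Closed convex hull of a set. -/
def cclo {V : Type*} [AddCommMonoid V] [Module ℝ V] [TopologicalSpace V] (S : Set V) : Set V :=
  closure (convexHull ℝ S)

/-- `sMul l f` is the function `l·f`, with the convention `0·f = I_{dom f}`
(i.e. `(l·f) z = +∞` whenever `f z = +∞`). -/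
def sMul (l : ℝ) (f : X → EReal) : X → EReal :=
  fun z => if f z = ⊤ then ⊤ else (l : EReal) * f z

def epi {E : Type*} (g : E → EReal) : Set (E × ℝ) := {q | g q.1 ≤ q.2}

lemma isClosed_epi {E : Type*} [TopologicalSpace E] {g : E → EReal}
    (hg : LowerSemicontinuous g) : IsClosed (epi g) :=
  hg.isClosed_epigraph.preimage
    (continuous_fst.prodMk (continuous_coe_real_ereal.comp continuous_snd))

def sweep {E : Type*} [AddCommGroup E] [Module ℝ E] (S : Set E) (v : E) : Set E :=
  {q | ∃ l : ℝ, 0 ≤ l ∧ q + l • v ∈ S}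

lemma subset_sweep {E : Type*} [AddCommGroup E] [Module ℝ E] (S : Set E) (v : E) :
    S ⊆ sweep S v :=
  fun q hq => ⟨0, le_rfl, by simpa using hq⟩

lemma Convex.sweep {E : Type*} [AddCommGroup E] [Module ℝ E] {S : Set E} (hS : Convex ℝ S)
    (v : E) : Convex ℝ (sweep S v) := by
  rintro q₁ ⟨l₁, hl₁, h₁⟩ q₂ ⟨l₂, hl₂, h₂⟩ a b ha hb hab
  refine ⟨a * l₁ + b * l₂, by positivity, ?_⟩
  convert hS h₁ h₂ ha hb hab using 1
  simp only [smul_add, add_smul, smul_smul]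
  abel

/-- The half-line above `x` forces the separating hyperplane to be non-vertical; normalising it
gives `c`. -/
lemma exists_dual_sub_lt_of_notMem_closure {E : Type*} [AddCommGroup E] [Module ℝ E]
    [TopologicalSpace E] [IsTopologicalAddGroup E] [ContinuousSMul ℝ E] [LocallyConvexSpace ℝ E]
    {A : Set (E × ℝ)} (hA : Convex ℝ A) {x : E} {a b : ℝ} (hvert : ∀ r, a ≤ r → (x, r) ∈ A)
    (hb : (x, b) ∉ closure A) :
    ∃ c : WeakDual ℝ E, ∀ q ∈ A, c q.1 - c x < q.2 - b := by
  obtain ⟨φ, u, hφ, hu⟩ := geometric_hahn_banach_closed_point hA.closure isClosed_closure hb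
  have hsplit : ∀ w r, φ (w, r) = φ (w, 0) + r * φ (0, 1) := fun w r => by
    rw [← smul_eq_mul, ← map_smul, ← map_add, Prod.smul_mk, smul_zero, smul_eq_mul, mul_one,
      Prod.mk_add_mk, add_zero, zero_add]
  set s := φ (0, 1)
  have hs : s < 0 := by
    have hr := hφ _ (subset_closure (hvert (max a b + 1) (by linarith [le_max_left a b])))
    rw [hsplit] at hr hu
    nlinarith [le_max_right a b]
  refine ⟨(-s)⁻¹ • φ.comp (ContinuousLinearMap.inl ℝ E ℝ), fun ⟨w, r⟩ hq => ?_⟩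
  have hq := hφ _ (subset_closure hq)
  rw [hsplit] at hq hu
  change (-s)⁻¹ * φ (w, 0) - (-s)⁻¹ * φ (x, 0) < r - b
  rw [← mul_sub, inv_mul_lt_iff₀ (neg_pos.2 hs)]
  nlinarith

section WeakDual

variable {E : Type*} [AddCommGroup E] [Module ℝ E] [TopologicalSpace E]

instance : LocallyConvexSpace ℝ (WeakDual ℝ E) :=
  WeakBilin.locallyConvexSpace (B := topDualPairing ℝ E)

/-- The weak* continuous functionals are the evaluations, so a closed convex set of the dual
is cut out by the half-spaces `{a | a y ≤ B}`. -/
lemma mem_recCone_iff_forall_bddAbove {K : Set (WeakDual ℝ E)} (hconv : Convex ℝ K)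
    (hclosed : IsClosed K) (hne : K.Nonempty) {p : WeakDual ℝ E} :
    p ∈ recCone K ↔ ∀ y : E, BddAbove ((fun a : WeakDual ℝ E => a y) '' K) → p y ≤ 0 := by
  constructor
  · rintro ⟨c, -, hray⟩ y ⟨B, hB⟩
    by_contra! hpy
    set l := (|B - c y| + 1) / p y
    have hl : l * p y = |B - c y| + 1 := div_mul_cancel₀ _ hpy.ne'
    have hcl : c y + l * p y ≤ B := hB ⟨_, hray l (by positivity), rfl⟩
    linarith [le_abs_self (B - c y)]
  · intro hp
    obtain ⟨c, hc⟩ := hne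
    refine ⟨c, hc, fun l hl => ?_⟩
    by_contra hnot
    obtain ⟨φ, u, hφ, hu⟩ := geometric_hahn_banach_closed_point hconv hclosed hnot
    obtain ⟨y, rfl⟩ := LinearMap.dualEmbedding_surjective (topDualPairing ℝ E) φ
    have hpy : p y ≤ 0 := hp y ⟨u, forall_mem_image.2 fun a ha => (hφ a ha).le⟩
    have hcy : c y < u := hφ c hc
    change u < c y + l * p y at hu
    nlinarith

lemma bddAbove_apply_cclo_iff {S : Set (WeakDual ℝ E)} {y : E} :
    BddAbove ((fun a : WeakDual ℝ E => a y) '' cclo S) ↔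
      BddAbove ((fun a : WeakDual ℝ E => a y) '' S) := by
  refine ⟨fun h => h.mono (image_mono (subset_closure.trans' (subset_convexHull ℝ S))), ?_⟩
  rintro ⟨B, hB⟩
  refine ⟨B, forall_mem_image.2 (closure_minimal (convexHull_min (fun a ha => hB ⟨a, ha, rfl⟩)
    (convex_halfSpace_le ⟨fun _ _ => rfl, fun _ _ => rfl⟩ B)) ?_)⟩
  exact isClosed_le (WeakDual.eval_continuous y) continuous_const

lemma mem_recCone_cclo_iff {S : Set (WeakDual ℝ E)} (hS : S.Nonempty) {p : WeakDual ℝ E} :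
    p ∈ recCone (cclo S) ↔ ∀ y : E, BddAbove ((fun a : WeakDual ℝ E => a y) '' S) → p y ≤ 0 :=
  (mem_recCone_iff_forall_bddAbove (convex_convexHull ℝ S).closure isClosed_closure
    (hS.mono (subset_closure.trans' (subset_convexHull ℝ S)))).trans
    (forall_congr' fun _ => imp_congr_left bddAbove_apply_cclo_iff)

end WeakDual

set_option linter.unusedSectionVars false

lemma EConvexOn'.le_convex_comb {g : X → EReal} (hg : EConvexOn' g) {x y : X} {r s a b : ℝ}
    (hx : g x ≤ r) (hy : g y ≤ s) (ha : 0 ≤ a) (hb : 0 ≤ b) (hab : a + b = 1) :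
    g (a • x + b • y) ≤ ((a * r + b * s : ℝ) : EReal) := by
  refine (hg x y a b ha hb hab).trans ?_
  rw [EReal.coe_add, EReal.coe_mul, EReal.coe_mul]
  exact add_le_add (mul_le_mul_of_nonneg_left hx (by exact_mod_cast ha))
    (mul_le_mul_of_nonneg_left hy (by exact_mod_cast hb))

lemma convex_epi {g : X → EReal} (hg : EConvexOn' g) : Convex ℝ (epi g) :=
  fun _ hq₁ _ hq₂ _ _ ha hb hab => hg.le_convex_comb hq₁ hq₂ ha hb hab

lemma EConvexOn'.sup {g h : X → EReal} (hg : EConvexOn' g) (hh : EConvexOn' h) :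
    EConvexOn' fun z => max (g z) (h z) := by
  intro x y a b ha hb hab
  have ha' : (0 : EReal) ≤ a := by exact_mod_cast ha
  have hb' : (0 : EReal) ≤ b := by exact_mod_cast hb
  refine max_le ((hg x y a b ha hb hab).trans ?_) ((hh x y a b ha hb hab).trans ?_) <;>
    exact add_le_add (mul_le_mul_of_nonneg_left (by simp) ha')
      (mul_le_mul_of_nonneg_left (by simp) hb')

lemma Gamma0.max_zero {g : X → EReal} (hg : Gamma0 g) : Gamma0 fun z => max (g z) 0 := by
  obtain ⟨hbot, ⟨x, hx⟩, hconv, hlsc⟩ := hg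
  refine ⟨fun z => ne_bot_of_le_ne_bot EReal.zero_ne_bot (le_max_right _ _),
    ⟨x, (max_lt hx.lt_top EReal.zero_lt_top).ne⟩, hconv.sup fun _ _ _ _ _ _ _ => by simp,
    hlsc.sup lowerSemicontinuous_const⟩

lemma EConvexOn'.le_apply_add_smul_of_le {h : X → EReal} (hh : EConvexOn' h) {x y : X}
    {m C μ μ' : ℝ} (hx : h x ≤ m) (hmC : m ≤ C) (hμ : 0 < μ) (hμμ' : μ ≤ μ')
    (hC : (C : EReal) ≤ h (x + μ • y)) : (C : EReal) ≤ h (x + μ' • y) := by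
  by_contra! hlt
  obtain ⟨s, hs, hsC⟩ := EReal.lt_iff_exists_real_btwn.1 hlt
  have hμ' : 0 < μ' := hμ.trans_le hμμ'
  set b := μ / μ'
  have hb : 0 < b := div_pos hμ hμ'
  have hb1 : 1 - b ≥ 0 := sub_nonneg.2 ((div_le_one hμ').2 hμμ')
  have hcomb : x + μ • y = (1 - b) • x + b • (x + μ' • y) := by
    rw [smul_add, smul_smul, div_mul_cancel₀ _ hμ'.ne', sub_smul, one_smul]; abel
  have hCle : C ≤ (1 - b) * m + b * s := by
    exact_mod_cast hC.trans (hcomb ▸ hh.le_convex_comb hx hs.le hb1 hb.le (by ring))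
  have hsC : s < C := by exact_mod_cast hsC
  nlinarith [mul_le_mul_of_nonneg_left hmC hb1]

/-- `g` grows at rate at least `(R - a) / μ` along the rays parallel to `d` through `x + W`. -/
lemma EConvexOn'.mul_sub_lt_of_lt_near_ray {g : X → EReal} (hg : EConvexOn' g) {x z d : X}
    {W : Set X} (hW : Convex ℝ W) (hW0 : 0 ∈ W) {a R r μ l : ℝ} (hx : g x ≤ a)
    (hR : ∀ w ∈ W, (R : EReal) < g (x + μ • d + w)) (hμ : 0 < μ) (hμl : μ ≤ l)
    (hz : z - x ∈ W) (hr : g (z + l • d) ≤ r) : l * (R - a) < μ * (r - a) := by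
  have hl : 0 < l := hμ.trans_le hμl
  set b := μ / l
  have hb : 0 < b := div_pos hμ hl
  have hb1 : b ≤ 1 := (div_le_one hl).2 hμl
  have hcomb : (1 - b) • x + b • (z + l • d) = x + μ • d + b • (z - x) := by
    rw [smul_add, smul_smul, div_mul_cancel₀ _ hl.ne', smul_sub, sub_smul, one_smul]
    abel
  have hRlt : R < (1 - b) * a + b * r := by
    exact_mod_cast (hR _ (hW.smul_mem_of_zero_mem hW0 hz ⟨hb.le, hb1⟩)).trans_le
      (hcomb ▸ hg.le_convex_comb hx hr (by linarith) hb.le (by ring))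
  have hlb : l * b = μ := mul_div_cancel₀ μ hl.ne'
  calc l * (R - a) < l * (b * (r - a)) := mul_lt_mul_of_pos_left (by linarith) hl
    _ = μ * (r - a) := by rw [← mul_assoc, hlb]

lemma mem_esubdiff_of_forall_epi {g : X → EReal} (hbot : ∀ z, g z ≠ ⊥) {x : X}
    (hx : g x ≠ ⊤) {ε : ℝ} (hε : 0 ≤ ε) {c : WeakDual ℝ X}
    (hc : ∀ q ∈ epi g, c q.1 - c x ≤ q.2 - ((g x).toReal - ε)) : c ∈ esubdiff g x ε := by
  refine ⟨hε, hx, hbot x, fun y => ?_⟩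
  rcases eq_or_ne (g y) ⊤ with hy | hy
  · simp [hy]
  have hcy := hc (y, (g y).toReal) (by simp [epi, EReal.coe_toReal hy (hbot y)])
  rw [← EReal.coe_toReal hx (hbot x), ← EReal.coe_toReal hy (hbot y), ← EReal.coe_add,
    EReal.coe_le_coe_iff]
  linarith

lemma esubdiff_nonempty {g : X → EReal} (hg : Gamma0 g) {x : X} (hx : g x ≠ ⊤) {ε : ℝ}
    (hε : 0 < ε) : (esubdiff g x ε).Nonempty := by
  have ha : ((g x).toReal : EReal) = g x := EReal.coe_toReal hx (hg.1 x)
  have hnot : (x, (g x).toReal - ε) ∉ closure (epi g) := by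
    rw [(isClosed_epi hg.2.2.2).closure_eq]
    intro h
    have : (g x).toReal ≤ (g x).toReal - ε := EReal.coe_le_coe_iff.1 (ha.le.trans h)
    linarith
  obtain ⟨c, hc⟩ := exists_dual_sub_lt_of_notMem_closure (convex_epi hg.2.2.1)
    (fun r hr => show g x ≤ r from ha ▸ EReal.coe_le_coe_iff.2 hr) hnot
  exact ⟨c, mem_esubdiff_of_forall_epi hg.1 hx hε.le fun q hq => (hc q hq).le⟩

lemma esubdiff_apply_sub_le {g : X → EReal} {x z : X} {ε a b : ℝ} {c : WeakDual ℝ X}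
    (hc : c ∈ esubdiff g x ε) (ha : (a : EReal) ≤ g x) (hb : g z ≤ b) :
    c z - c x ≤ b - a + ε := by
  have h := (add_le_add_left ha _).trans ((hc.2.2.2 z).trans hb)
  rw [← EReal.coe_add, EReal.coe_le_coe_iff] at h
  linarith

/-- Near `x` the bound comes from an `ε / 2`-subgradient, far out along `d` from `g = ⊤` on the
ray and lower semicontinuity. -/
lemma notMem_closure_sweep_epi {g : X → EReal} (hg : Gamma0 g) {x d : X} (hx : g x ≠ ⊤)
    (hray : ∀ l : ℝ, 0 < l → g (x + l • d) = ⊤) {ε : ℝ} (hε : 0 < ε) (M : ℝ) :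
    (x, (g x).toReal - ε) ∉ closure (sweep (epi g) (d, M)) := by
  set a := (g x).toReal
  have ha : (a : EReal) = g x := EReal.coe_toReal hx (hg.1 x)
  obtain ⟨c₀, hc₀⟩ := esubdiff_nonempty hg hx (half_pos hε)
  set μ := ε / (8 * (|c₀ d| + |M| + 1))
  have hμ : 0 < μ := by positivity
  have hμsum : μ * (|c₀ d| + |M| + 1) = ε / 8 := by
    simp only [μ]; field_simp
  have hV : {v | ((a + μ * (M + 1) : ℝ) : EReal) < g v} ∈ 𝓝 (x + μ • d) :=
    hg.2.2.2 _ _ (show _ < g (x + μ • d) from (hray μ hμ).symm ▸ EReal.coe_lt_top _)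
  obtain ⟨W, ⟨hW, hWconv⟩, hWV⟩ := (LocallyConvexSpace.convex_basis_zero ℝ X).mem_iff.1
    ((continuous_const.add continuous_id).tendsto' 0 (x + μ • d) (add_zero _) hV)
  set U := {z | z - x ∈ W} ∩ {z | |c₀ (z - x)| < ε / 8}
  have hU : U ∈ 𝓝 x := Filter.inter_mem
    ((continuous_id.sub continuous_const).tendsto' x 0 (sub_self x) hW)
    ((isOpen_lt (by fun_prop) continuous_const).mem_nhds (by simp; positivity))
  have key : ∀ z ∈ U, ∀ l, 0 ≤ l → ∀ r : ℝ, g (z + l • d) ≤ r → a - 7 / 8 * ε ≤ r - l * M := by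
    rintro z ⟨hzW, hzc : |c₀ (z - x)| < ε / 8⟩ l hl r hr
    rcases le_or_gt l μ with hlμ | hμl
    · have hsub := esubdiff_apply_sub_le hc₀ ha.le hr
      rw [map_add, map_smul, smul_eq_mul] at hsub
      rw [map_sub] at hzc
      have hld : |l * c₀ d| ≤ ε / 8 := by
        rw [abs_mul, abs_of_nonneg hl]; nlinarith [abs_nonneg (c₀ d), abs_nonneg M]
      have hlM : |l * M| ≤ ε / 8 := by
        rw [abs_mul, abs_of_nonneg hl]; nlinarith [abs_nonneg (c₀ d), abs_nonneg M]
      linarith [abs_le.1 hld, abs_le.1 hlM, abs_lt.1 hzc]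
    · have hslope := hg.2.2.1.mul_sub_lt_of_lt_near_ray hWconv (mem_of_mem_nhds hW) ha.ge
        (fun w hw => hWV hw) hμ hμl.le hzW hr
      have : μ * (l * (M + 1)) < μ * (r - a) := by linarith
      nlinarith [(mul_lt_mul_iff_right₀ hμ).1 this]
  intro hmem
  obtain ⟨⟨z, s⟩, ⟨hzU, hs⟩, l, hl, hq⟩ := mem_closure_iff_nhds.1 hmem _
    (prod_mem_nhds hU (Iio_mem_nhds (show a - ε < a - 7 / 8 * ε by linarith)))
  have := key z hzU l hl (s + l * M) hq
  simp only [mem_Iio] at hs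
  linarith

lemma not_bddAbove_apply_esubdiff {g : X → EReal} (hg : Gamma0 g) {x d : X} (hx : g x ≠ ⊤)
    (hray : ∀ l : ℝ, 0 < l → g (x + l • d) = ⊤) {ε : ℝ} (hε : 0 < ε) :
    ¬BddAbove ((fun c : WeakDual ℝ X => c d) '' esubdiff g x ε) := by
  rintro ⟨M, hM⟩
  set a := (g x).toReal
  have ha : (a : EReal) = g x := EReal.coe_toReal hx (hg.1 x)
  have hepi := subset_sweep (epi g) (d, M + 1)
  obtain ⟨c, hc⟩ := exists_dual_sub_lt_of_notMem_closure
    ((convex_epi hg.2.2.1).sweep _)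
    (fun r hr => hepi (show g x ≤ r from ha ▸ EReal.coe_le_coe_iff.2 hr))
    (notMem_closure_sweep_epi hg hx hray hε (M + 1))
  have hcM : c d ≤ M :=
    hM ⟨c, mem_esubdiff_of_forall_epi hg.1 hx hε.le fun q hq => (hc q (hepi hq)).le, rfl⟩
  have hback := hc (x - ε • d, a - ε * (M + 1)) ⟨ε, hε.le, by
    change g (x - ε • d + ε • d) ≤ ((a - ε * (M + 1) + ε * (M + 1) : ℝ) : EReal)
    rw [sub_add_cancel, sub_add_cancel, ha]⟩
  rw [map_sub, map_smul, smul_eq_mul] at hback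
  nlinarith

lemma exists_forall_eq_top_of_iSup_eq_top {T : Type*} [TopologicalSpace T] [CompactSpace T]
    {f : T → X → EReal} (hconv : ∀ t, EConvexOn' (f t))
    (husc : ∀ z, UpperSemicontinuous fun t => f t z) {x y : X} {m : ℝ} (hm : ∀ t, f t x ≤ m)
    (hray : ∀ l : ℝ, 0 < l → ⨆ t, f t (x + l • y) = ⊤) :
    ∃ t, ∀ l : ℝ, 0 < l → f t (x + l • y) = ⊤ := by
  set K : ℕ → Set T := fun n => {t | ((n + m : ℝ) : EReal) ≤ f t (x + ((n : ℝ) + 1)⁻¹ • y)}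
  have hK_closed : ∀ n, IsClosed (K n) := fun n => (husc _).isClosed_preimage _
  have hK_anti : ∀ n, K (n + 1) ⊆ K n := by
    intro n t ht
    have ht' : (((n + 1 : ℝ) + m : ℝ) : EReal) ≤ f t (x + ((n + 1 : ℝ) + 1)⁻¹ • y) := by
      simpa only [K, mem_ofPred_eq, Nat.cast_succ] using ht
    refine le_trans (by exact_mod_cast (by linarith : (n : ℝ) + m ≤ (n + 1 : ℝ) + m))
      ((hconv t).le_apply_add_smul_of_le (hm t) (by linarith [n.cast_nonneg (α := ℝ)])
        (by positivity) ?_ ht')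
    gcongr
    linarith
  have hK_ne : ∀ n, (K n).Nonempty := fun n => by
    obtain ⟨t, ht⟩ := lt_iSup_iff.1
      ((hray ((n : ℝ) + 1)⁻¹ (by positivity)).symm ▸ EReal.coe_lt_top (n + m))
    exact ⟨t, ht.le⟩
  obtain ⟨t, ht⟩ := IsCompact.nonempty_iInter_of_sequence_nonempty_isCompact_isClosed K hK_anti
    hK_ne (hK_closed 0).isCompact hK_closed
  refine ⟨t, fun l hl => (EReal.eq_top_iff_forall_lt _).2 fun C => ?_⟩
  obtain ⟨n, hn⟩ := exists_nat_gt (max l⁻¹ (C - m))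
  have hnl : ((n : ℝ) + 1)⁻¹ ≤ l := inv_le_of_inv_le₀ hl (by linarith [le_max_left l⁻¹ (C - m)])
  calc (C : EReal) < (n + m : ℝ) := by
        exact_mod_cast (by linarith [le_max_right l⁻¹ (C - m)] : C < n + m)
    _ ≤ f t (x + l • y) := (hconv t).le_apply_add_smul_of_le (hm t)
        (by linarith [n.cast_nonneg (α := ℝ)]) (by positivity) hnl (mem_iInter.1 ht n)

section Family

variable {T : Type*} {f : T → X → EReal}

/-- The index set `T_ε(x)` of the paper. -/
def epsActive (f : T → X → EReal) (x : X) (ε : ℝ) : Set T :=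
  {t | (⨆ s, f s x) - (ε : EReal) ≤ f t x}

def epsSubdiffUnion (f : T → X → EReal) (x : X) (ε : ℝ) : Set (WeakDual ℝ X) :=
  (⋃ t ∈ epsActive f x ε, esubdiff (f t) x ε) ∪
    (⋃ t ∈ (epsActive f x ε)ᶜ, esubdiff (fun z => max (f t z) 0) x ε)

lemma epsSubdiffUnion_nonempty (hf : ∀ t, Gamma0 (f t)) {x : X} {m ε : ℝ}
    (hm : ⨆ t, f t x = (m : EReal)) (hε : 0 < ε) : (epsSubdiffUnion f x ε).Nonempty := by
  obtain ⟨t, ht⟩ := lt_iSup_iff.1 (show ((m - ε : ℝ) : EReal) < ⨆ t, f t x from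
    hm ▸ EReal.coe_lt_coe_iff.2 (by linarith))
  have hact : t ∈ epsActive f x ε := by
    show (⨆ s, f s x) - (ε : EReal) ≤ f t x
    rw [hm, ← EReal.coe_sub]
    exact ht.le
  obtain ⟨c, hc⟩ := esubdiff_nonempty (hf t) (ne_top_of_le_ne_top (hm ▸ EReal.coe_ne_top m)
    (le_iSup (fun s => f s x) t)) hε
  exact ⟨c, Or.inl (mem_biUnion hact hc)⟩

lemma bddAbove_apply_sub_epsSubdiffUnion {x z : X} {m b ε : ℝ} (hm : ⨆ t, f t x = (m : EReal))
    (hb : ∀ t, f t z ≤ b) :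
    BddAbove ((fun c : WeakDual ℝ X => c (z - x)) '' epsSubdiffUnion f x ε) := by
  refine ⟨max (b - m + 2 * ε) (max b 0 + ε), forall_mem_image.2 ?_⟩
  rintro c (hc | hc) <;> obtain ⟨t, ht, hc⟩ := mem_iUnion₂.1 hc <;> rw [map_sub]
  · have hmt : ((m - ε : ℝ) : EReal) ≤ f t x := by rw [EReal.coe_sub, ← hm]; exact ht
    have := esubdiff_apply_sub_le hc hmt (hb t)
    exact le_max_of_le_left (by linarith)
  · have := esubdiff_apply_sub_le (a := 0) (b := max b 0) hc (by simp)
      (max_le ((hb t).trans (EReal.coe_le_coe_iff.2 (le_max_left _ _)))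
        (by exact_mod_cast le_max_right b 0))
    exact le_max_of_le_right (by linarith)

/-- By compactness a single `f t` is already `+∞` on the ray. -/
lemma not_bddAbove_apply_epsSubdiffUnion [TopologicalSpace T] [CompactSpace T]
    (hf : ∀ t, Gamma0 (f t)) (husc : ∀ z, UpperSemicontinuous fun t => f t z) {x y : X}
    {m ε : ℝ} (hm : ⨆ t, f t x = (m : EReal)) (hε : 0 < ε)
    (hray : ∀ l : ℝ, 0 < l → ⨆ t, f t (x + l • y) = ⊤) :
    ¬BddAbove ((fun c : WeakDual ℝ X => c y) '' epsSubdiffUnion f x ε) := by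
  have hfx : ∀ t, f t x ≤ m := fun t => hm ▸ le_iSup (fun s => f s x) t
  obtain ⟨t, ht⟩ := exists_forall_eq_top_of_iSup_eq_top (fun t => (hf t).2.2.1) husc hfx hray
  have hftx : f t x ≠ ⊤ := ne_top_of_le_ne_top (EReal.coe_ne_top m) (hfx t)
  intro hbdd
  by_cases hact : t ∈ epsActive f x ε
  · refine not_bddAbove_apply_esubdiff (hf t) hftx ht hε (hbdd.mono (image_mono ?_))
    exact (subset_biUnion_of_mem (u := fun t => esubdiff (f t) x ε) hact).trans
      subset_union_left
  · refine not_bddAbove_apply_esubdiff (hf t).max_zero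
      (max_lt hftx.lt_top EReal.zero_lt_top).ne (fun l hl => by simp [ht l hl]) hε
      (hbdd.mono (image_mono ?_))
    exact (subset_biUnion_of_mem (u := fun t => esubdiff (fun z => max (f t z) 0) x ε)
      hact).trans subset_union_right

end Family

theorem statement12_general {T : Type*} [TopologicalSpace T] [CompactSpace T] [Nonempty T]
    (f : T → X → EReal) (hf : ∀ t, Gamma0 (f t))
    (husc : ∀ z : X, UpperSemicontinuous fun t => f t z)
    (x : X) (hx : x ∈ edom (fun z => ⨆ t, f t z))
    (ε : ℝ) (hε : 0 < ε) :
    normalCone (edom (fun z => ⨆ t, f t z)) x =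
      recCone (cclo
        ((⋃ t ∈ {t : T | (⨆ s, f s x) - (ε : EReal) ≤ f t x}, esubdiff (f t) x ε) ∪
         (⋃ t ∈ {t : T | (⨆ s, f s x) - (ε : EReal) ≤ f t x}ᶜ,
            esubdiff (fun z => max (f t z) 0) x ε))) := by
  have hreal : ∀ z, (⨆ t, f t z) ≠ ⊤ → ∃ b : ℝ, (⨆ t, f t z) = b := fun z hz =>
    ⟨_, (EReal.coe_toReal hz (ne_bot_of_le_ne_bot ((hf (Classical.arbitrary T)).1 z)
      (le_iSup (fun t => f t z) _))).symm⟩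
  obtain ⟨m, hm⟩ := hreal x hx
  change _ = recCone (cclo (epsSubdiffUnion f x ε))
  ext p
  rw [mem_recCone_cclo_iff (epsSubdiffUnion_nonempty hf hm hε)]
  constructor
  · rintro ⟨-, hp⟩ y hy
    by_contra! hpy
    refine not_bddAbove_apply_epsSubdiffUnion hf husc hm hε (fun l hl => ?_) hy
    by_contra hdom
    have hnormal := hp _ hdom
    rw [map_add, map_smul, smul_eq_mul] at hnormal
    nlinarith [mul_pos hl hpy]
  · refine fun hp => ⟨hx, fun z hz => ?_⟩
    obtain ⟨b, hb⟩ := hreal z hz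
    simpa only [map_sub, sub_nonpos] using hp (z - x)
      (bddAbove_apply_sub_epsSubdiffUnion hm fun t => hb ▸ le_iSup (fun s => f s z) t)

/-- Corollary `normalnew`, first formula: under (SH), for `x ∈ dom f` and
`ε > 0`, `N_{dom f}(x) = [co‾((⋃_{t∈T_ε(x)} ∂_ε f_t(x)) ∪ (⋃_{t∉T_ε(x)} ∂_ε f_t⁺(x)))]_∞`. -/
theorem statement12 {T : Type*} [TopologicalSpace T] [CompactSpace T] [T2Space T] [Nonempty T]
    (f : T → X → EReal) (hf : ∀ t, Gamma0 (f t))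
    (husc : ∀ z : X, UpperSemicontinuous fun t => f t z)
    (x : X) (hx : x ∈ edom (fun z => ⨆ t, f t z))
    (ε : ℝ) (hε : 0 < ε) :
    normalCone (edom (fun z => ⨆ t, f t z)) x =
      recCone (cclo
        ((⋃ t ∈ {t : T | (⨆ s, f s x) - (ε : EReal) ≤ f t x}, esubdiff (f t) x ε) ∪
         (⋃ t ∈ {t : T | (⨆ s, f s x) - (ε : EReal) ≤ f t x}ᶜ,
            esubdiff (fun z => max (f t z) 0) x ε))) :=
  statement12_general f hf husc x hx ε hε
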